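/- For every φ ∈ P, the E^{20}-projection of the curvature action on φ is given by the symplectic Ricci tensor: q^{20}(R^Sφ) = (𝕚/(2l)) Σ_{i,j,k,m} σ^{ij} ω_{km} ε^k∧ε^m ⊗ e_{ij}·φ, where σ^{ij} := Σ_{a,b} ω^{ia}ω^{jb}σ_{ab}. (This is the paper's Corollary 11, first formula, with the normalization factor 1/(2(l+1)) of σ̃ correctly carried through.) -/

import Mathlib

noncomputable section

open Finset MvPolynomial

/-- The space of symplectic spinors: complex polynomials in `l` variables. -/
abbrev Pol (l : ℕ) := MvPolynomial (Fin l) ℂ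

/-- Components `ω_{ij}` of the standard symplectic form on `ℝ^{2l}`. -/
def om (l : ℕ) (i j : Fin (2*l)) : ℝ :=
  if (j : ℕ) = (i : ℕ) + l then 1 else if (i : ℕ) = (j : ℕ) + l then -1 else 0

/-- Components `ω^{ij}`, defined by `Σ_k ω_{ik} ω^{jk} = δ_i^j`. -/
def omUp (l : ℕ) (i j : Fin (2*l)) : ℝ :=
  if (j : ℕ) = (i : ℕ) + l then 1 else if (i : ℕ) = (j : ℕ) + l then -1 else 0

/-- Symplectic Clifford multiplication by a basis vector `e_i`. -/
def cliff (l : ℕ) (i : Fin (2*l)) (f : Pol l) : Pol l :=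
  if h : (i : ℕ) < l then Complex.I • (MvPolynomial.X (⟨(i : ℕ), h⟩ : Fin l) * f)
  else MvPolynomial.pderiv (⟨(i : ℕ) - l, by have := i.isLt; omega⟩ : Fin l) f

/-- Symplectic Clifford multiplication by an arbitrary vector, extended ℝ-bilinearly. -/
def cliffV (l : ℕ) (v : Fin (2*l) → ℝ) (f : Pol l) : Pol l :=
  ∑ i, ((v i : ℝ) : ℂ) • cliff l i f

/-- Symplectic-spinor-valued `r`-forms (as functions of their `r` vector arguments). -/
abbrev Form (l r : ℕ) := (Fin r → (Fin (2*l) → ℝ)) → Pol l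

/-- The standard basis vector `e_i` of `ℝ^{2l}`. -/
def basisVec (l : ℕ) (i : Fin (2*l)) : Fin (2*l) → ℝ := Pi.single i 1

/-- The operator `X`: `(Xφ)(v_1,…,v_{r+1}) = −Σ_a (−1)^{a+1} v_a · φ(v_1,…,v̂_a,…,v_{r+1})`. -/
def Xop (l r : ℕ) (φ : Form l r) : Form l (r+1) :=
  fun v => -∑ a : Fin (r+1), ((-1 : ℂ)^(a : ℕ)) • cliffV l (v a) (φ (fun b => v (a.succAbove b)))

/-- The operator `Y`: `(Yφ)(v_1,…,v_r) = Σ_{i,j} ω^{ij} e_j · φ(e_i, v_1,…,v_r)`. -/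
def Yop (l r : ℕ) (φ : Form l (r+1)) : Form l r :=
  fun v => ∑ i, ∑ j, ((omUp l i j : ℝ) : ℂ) • cliff l j (φ (Fin.cons (basisVec l i) v))

/-- The operator `H = XY + YX` (on 0-forms `Y` vanishes, so there `H = YX`). -/
def Hop (l : ℕ) : {r : ℕ} → Form l r → Form l r
  | 0, φ => Yop l 0 (Xop l 0 φ)
  | (r+1), φ => Xop l r (Yop l r φ) + Yop l (r+1) (Xop l (r+1) φ)

/-- `X²Y²` on spinor-valued 2-forms. -/
def XXYY (l : ℕ) (φ : Form l 2) : Form l 2 := Xop l 1 (Xop l 0 (Yop l 0 (Yop l 1 φ)))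

/-- `XY` on spinor-valued 2-forms. -/
def XY2 (l : ℕ) (φ : Form l 2) : Form l 2 := Xop l 1 (Yop l 1 φ)

/-- The projection `q^{20} = (1/l) X²Y²`. -/
def q20 (l : ℕ) (φ : Form l 2) : Form l 2 := ((l : ℂ))⁻¹ • XXYY l φ

/-- The projection `q^{21} = (𝕚/(1−l)) (XY − (𝕚/l) X²Y²)`. -/
def q21 (l : ℕ) (φ : Form l 2) : Form l 2 :=
  (Complex.I / (1 - (l : ℂ))) • (XY2 l φ - (Complex.I / (l : ℂ)) • XXYY l φ)

/-- The projection `q^{22} = Id − q^{20} − q^{21}`. -/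
def q22 (l : ℕ) (φ : Form l 2) : Form l 2 := φ - q20 l φ - q21 l φ

/-- The spinor-valued 2-form `c · ε^k ∧ ε^m ⊗ s`. -/
def w2 (l : ℕ) (c : ℝ) (k m : Fin (2*l)) (s : Pol l) : Form l 2 :=
  fun v => ((c * (v 0 k * v 1 m - v 0 m * v 1 k) : ℝ) : ℂ) • s

/-- The symplectic Ricci tensor `σ_{ij} = Σ_{k,m} ω^{km} R_{mjki}`. -/
def ric (l : ℕ) (R : Fin (2*l) → Fin (2*l) → Fin (2*l) → Fin (2*l) → ℝ)
    (i j : Fin (2*l)) : ℝ :=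
  ∑ k, ∑ m, omUp l k m * R m j k i

/-- `σ̃_{ijkl}` built from a symmetric tensor `σ`. -/
def st (l : ℕ) (σ : Fin (2*l) → Fin (2*l) → ℝ) (i j k m : Fin (2*l)) : ℝ :=
  (1/(2*((l : ℝ)+1))) * (om l i m * σ j k - om l i k * σ j m
    + om l j m * σ i k - om l j k * σ i m + 2 * σ i j * om l k m)

/-- The symplectic Weyl tensor `W = R − σ̃`. -/
def weyl (l : ℕ) (R : Fin (2*l) → Fin (2*l) → Fin (2*l) → Fin (2*l) → ℝ)
    (i j k m : Fin (2*l)) : ℝ :=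
  R i j k m - st l (ric l R) i j k m

/-- Raising all four indices: `T^{ijkm} = Σ ω^{ia}ω^{jb}ω^{kc}ω^{md} T_{abcd}`. -/
def upT (l : ℕ) (T : Fin (2*l) → Fin (2*l) → Fin (2*l) → Fin (2*l) → ℝ)
    (i j k m : Fin (2*l)) : ℝ :=
  ∑ a, ∑ b, ∑ c, ∑ d, omUp l i a * omUp l j b * omUp l k c * omUp l m d * T a b c d

/-- Raising both indices of a 2-tensor: `σ^{ij} = Σ ω^{ia}ω^{jb} σ_{ab}`. -/
def up2 (l : ℕ) (σ : Fin (2*l) → Fin (2*l) → ℝ) (i j : Fin (2*l)) : ℝ :=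
  ∑ a, ∑ b, omUp l i a * omUp l j b * σ a b

/-- The spinor-valued 2-form `(𝕚/2) Σ T^{ij}_{kl} ε^k ∧ ε^l ⊗ e_{ij}·φ` built from a
4-tensor `T` (used for `R^S φ`, `σ^S φ` and `W^S φ`). -/
def curvS (l : ℕ) (T : Fin (2*l) → Fin (2*l) → Fin (2*l) → Fin (2*l) → ℝ)
    (φ : Pol l) : Form l 2 :=
  (Complex.I/2) • ∑ i, ∑ j, ∑ k, ∑ m,
    w2 l (∑ a, ∑ b, omUp l i a * omUp l j b * T a b k m) k m (cliff l i (cliff l j φ))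

/-- The spinor-valued 2-form `Σ_{i,j,k,d,m} T^{ijk}_d ε^m ∧ ε^d ⊗ e_{mkij}·φ`. -/
def mixS (l : ℕ) (T : Fin (2*l) → Fin (2*l) → Fin (2*l) → Fin (2*l) → ℝ)
    (φ : Pol l) : Form l 2 :=
  ∑ i, ∑ j, ∑ k, ∑ d, ∑ m,
    w2 l (∑ a, ∑ b, ∑ c, omUp l i a * omUp l j b * omUp l k c * T a b c d) m d
      (cliff l m (cliff l k (cliff l i (cliff l j φ))))

/-! Contracting both slots of `ε^k ∧ ε^m ⊗ s` with `Y` gives `[e^m, e^k] s = 𝕚 ω^{km} s`, so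
`Y²(R^S φ)` only sees the trace `Σ ω^{km} R_{abkm}`, which the first Bianchi identity turns into
`2 σ_{ab}`; hence `Y²(R^S φ) = -Σ σ^{ij} e_{ij}·φ`. On a 0-form, `X²` is the commutator
`[v₀, v₁] = -𝕚 ω(v₀, v₁) = -(𝕚/2) Σ ω_{km} ε^k ∧ ε^m (v₀, v₁)`, which gives the formula. -/

theorem MvPolynomial.pderiv_pderiv_comm {σ R : Type*} [CommSemiring R] (a b : σ)
    (f : MvPolynomial σ R) : pderiv a (pderiv b f) = pderiv b (pderiv a f) := by
  classical
  induction f using MvPolynomial.induction_on with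
  | C c => simp
  | add p q hp hq => simp [hp, hq]
  | mul_X p s hp =>
    simp only [pderiv_mul, hp, pderiv_X, map_add, Pi.single_apply, apply_ite (pderiv a),
      apply_ite (pderiv b)]
    split_ifs <;> simp; ring

section Symplectic

variable {l : ℕ}

theorem om_antisymm (i j : Fin (2*l)) : om l i j = -om l j i := by
  unfold om
  split_ifs <;> first | omega | norm_num

theorem omUp_antisymm (i j : Fin (2*l)) : omUp l i j = -omUp l j i :=
  om_antisymm i j

theorem sum_om_mul_omUp (i j : Fin (2*l)) :
    ∑ q, om l i q * omUp l j q = if i = j then 1 else 0 := by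
  have hi := i.isLt
  have hj := j.isLt
  -- the only nonzero entry of the row `ω_{i·}` sits in column `i ± l`
  obtain ⟨q₀, hq₀⟩ : ∃ q₀ : Fin (2*l),
      (i : ℕ) < l ∧ (q₀ : ℕ) = i + l ∨ l ≤ (i : ℕ) ∧ (q₀ : ℕ) + l = i := by
    by_cases h : (i : ℕ) < l
    · exact ⟨⟨i + l, by omega⟩, Or.inl ⟨h, rfl⟩⟩
    · exact ⟨⟨i - l, by omega⟩, Or.inr ⟨by omega, by simp only; omega⟩⟩
  rw [Finset.sum_eq_single q₀ (fun q _ hq => by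
    have : (q : ℕ) ≠ q₀ := fun h => hq (Fin.ext h)
    unfold om; split_ifs <;> first | omega | simp) (by simp)]
  unfold om omUp
  simp only [Fin.ext_iff]
  split_ifs <;> first | omega | norm_num

theorem sum_omUp_mul_swap (F : Fin (2*l) → Fin (2*l) → ℝ) :
    ∑ k, ∑ m, omUp l k m * F m k = -∑ k, ∑ m, omUp l k m * F k m := by
  rw [Finset.sum_comm, ← Finset.sum_neg_distrib]
  refine Finset.sum_congr rfl fun k _ => ?_
  rw [← Finset.sum_neg_distrib]
  exact Finset.sum_congr rfl fun m _ => by rw [omUp_antisymm]; ring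

def omPair (l : ℕ) (u w : Fin (2*l) → ℝ) : ℝ := ∑ k, ∑ m, om l k m * u k * w m

theorem omPair_omUp (i j : Fin (2*l)) : omPair l (omUp l i) (omUp l j) = omUp l i j := by
  calc omPair l (omUp l i) (omUp l j) = ∑ a, omUp l i a * ∑ b, om l a b * omUp l j b := by
        simp only [omPair, Finset.mul_sum]
        exact Finset.sum_congr rfl fun a _ => Finset.sum_congr rfl fun b _ => by ring
    _ = omUp l i j := by simp [sum_om_mul_omUp]

theorem sum_om_mul_wedge (u w : Fin (2*l) → ℝ) :
    ∑ k, ∑ m, om l k m * (u k * w m - u m * w k) = 2 * omPair l u w := by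
  have swapped : ∑ k, ∑ m, om l k m * (u m * w k) = -omPair l u w := by
    rw [omPair, Finset.sum_comm, ← Finset.sum_neg_distrib]
    refine Finset.sum_congr rfl fun k _ => ?_
    rw [← Finset.sum_neg_distrib]
    exact Finset.sum_congr rfl fun m _ => by rw [om_antisymm]; ring
  simp only [mul_sub, Finset.sum_sub_distrib, swapped, omPair, mul_assoc]
  ring

end Symplectic

section Clifford

variable {l : ℕ}

def cliffLin (l : ℕ) (i : Fin (2*l)) : Pol l →ₗ[ℂ] Pol l where
  toFun := cliff l i
  map_add' f g := by
    unfold cliff; split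
    · rw [mul_add, smul_add]
    · exact map_add _ _ _
  map_smul' c f := by
    unfold cliff; split
    · rw [mul_smul_comm, smul_comm, RingHom.id_apply]
    · rw [RingHom.id_apply, Derivation.map_smul]

theorem cliff_smul (i : Fin (2*l)) (c : ℂ) (f : Pol l) :
    cliff l i (c • f) = c • cliff l i f :=
  (cliffLin l i).map_smul c f

theorem cliff_sum {ι : Type*} (i : Fin (2*l)) (s : Finset ι) (f : ι → Pol l) :
    cliff l i (∑ x ∈ s, f x) = ∑ x ∈ s, cliff l i (f x) :=
  map_sum (cliffLin l i) f s

theorem cliff_add (i : Fin (2*l)) (f g : Pol l) : cliff l i (f + g) = cliff l i f + cliff l i g :=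
  (cliffLin l i).map_add f g

def cliffVLin (l : ℕ) (v : Fin (2*l) → ℝ) : Pol l →ₗ[ℂ] Pol l :=
  ∑ i, (v i : ℂ) • cliffLin l i

theorem cliffVLin_apply (v : Fin (2*l) → ℝ) (f : Pol l) : cliffVLin l v f = cliffV l v f := by
  simp [cliffVLin, cliffV, cliffLin]

theorem cliffV_smul (v : Fin (2*l) → ℝ) (c : ℂ) (f : Pol l) :
    cliffV l v (c • f) = c • cliffV l v f := by
  simp only [← cliffVLin_apply, map_smul]

theorem cliffV_neg (v : Fin (2*l) → ℝ) (f : Pol l) : cliffV l v (-f) = -cliffV l v f := by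
  simp only [← cliffVLin_apply, map_neg]

theorem cliffV_zero (v : Fin (2*l) → ℝ) : cliffV l v 0 = 0 := by
  simp only [← cliffVLin_apply, map_zero]

theorem cliff_comm (i j : Fin (2*l)) (f : Pol l) :
    cliff l i (cliff l j f) - cliff l j (cliff l i f) = -(Complex.I * (om l i j : ℂ)) • f := by
  have hi := i.isLt
  have hj := j.isLt
  unfold cliff om
  by_cases hil : (i : ℕ) < l <;> by_cases hjl : (j : ℕ) < l <;>
    simp only [hil, hjl, dite_true, dite_false]
  · rw [if_neg (by omega), if_neg (by omega)]
    simp only [mul_smul_comm]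
    rw [mul_left_comm (X _)]
    simp
  · by_cases h : (j : ℕ) = i + l
    · have : (⟨j - l, by omega⟩ : Fin l) = ⟨i, hil⟩ := Fin.ext (by simp only; omega)
      rw [if_pos h, this, Derivation.map_smul, pderiv_mul, pderiv_X_self]
      simp only [one_mul, Complex.ofReal_one, mul_one, smul_add]
      module
    · have : (⟨i, hil⟩ : Fin l) ≠ ⟨j - l, by omega⟩ := fun h' => by simp at h'; omega
      rw [if_neg h, if_neg (by omega), Derivation.map_smul, pderiv_mul, pderiv_X_of_ne this]
      simp
  · by_cases h : (i : ℕ) = j + l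
    · have : (⟨i - l, by omega⟩ : Fin l) = ⟨j, hjl⟩ := Fin.ext (by simp only; omega)
      rw [if_neg (by omega), if_pos h, this, Derivation.map_smul, pderiv_mul, pderiv_X_self]
      simp only [one_mul, Complex.ofReal_neg, Complex.ofReal_one, mul_neg, mul_one, smul_add]
      module
    · have : (⟨j, hjl⟩ : Fin l) ≠ ⟨i - l, by omega⟩ := fun h' => by simp at h'; omega
      rw [if_neg (by omega), if_neg h, Derivation.map_smul, pderiv_mul, pderiv_X_of_ne this]
      simp
  · rw [if_neg (by omega), if_neg (by omega), pderiv_pderiv_comm]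
    simp

theorem cliffV_comm (u w : Fin (2*l) → ℝ) (f : Pol l) :
    cliffV l u (cliffV l w f) - cliffV l w (cliffV l u f)
      = -(Complex.I * (omPair l u w : ℂ)) • f := by
  have swapped : cliffV l w (cliffV l u f)
      = ∑ k, ∑ m, ((u k * w m : ℝ) : ℂ) • cliff l m (cliff l k f) := by
    simp only [cliffV, cliff_sum, cliff_smul, Finset.smul_sum, smul_smul]
    rw [Finset.sum_comm]
    simp only [Complex.ofReal_mul, mul_comm]
  have : cliffV l u (cliffV l w f)
      = ∑ k, ∑ m, ((u k * w m : ℝ) : ℂ) • cliff l k (cliff l m f) := by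
    simp only [cliffV, cliff_sum, cliff_smul, Finset.smul_sum, smul_smul, Complex.ofReal_mul]
  simp only [this, swapped, ← Finset.sum_sub_distrib, ← smul_sub, cliff_comm, smul_smul]
  simp only [← Finset.sum_smul, omPair, Complex.ofReal_sum, Finset.mul_sum,
    ← Finset.sum_neg_distrib]
  refine congrArg (· • f) (Finset.sum_congr rfl fun k _ => Finset.sum_congr rfl fun m _ => ?_)
  push_cast
  ring

end Clifford

section Contraction

variable {l : ℕ}

def YopLin (l r : ℕ) : Form l (r+1) →ₗ[ℂ] Form l r where
  toFun := Yop l r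
  map_add' φ ψ := by
    funext v
    simp only [Yop, Pi.add_apply, cliff_add, smul_add, Finset.sum_add_distrib]
  map_smul' c φ := by
    funext v
    simp only [Yop, Pi.smul_apply, cliff_smul, Finset.smul_sum, smul_comm c, RingHom.id_apply]

theorem YopLin_apply {r : ℕ} (φ : Form l (r+1)) : YopLin l r φ = Yop l r φ := rfl

-- `cliffV l (omUp l i)` is Clifford multiplication by the raised vector `e^i = Σ_j ω^{ij} e_j`.
theorem Yop_apply {r : ℕ} (φ : Form l (r+1)) (v : Fin r → Fin (2*l) → ℝ) :
    Yop l r φ v = ∑ i, cliffV l (omUp l i) (φ (Fin.cons (basisVec l i) v)) := rfl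

/-- The spinor-valued 1-form `ε^m ⊗ t`. -/
def w1 (l : ℕ) (m : Fin (2*l)) (t : Pol l) : Form l 1 := fun u => (u 0 m : ℂ) • t

theorem Yop_w1 (m : Fin (2*l)) (t : Pol l) :
    Yop l 0 (w1 l m t) = fun _ => cliffV l (omUp l m) t := by
  funext v
  simp [Yop_apply, w1, basisVec, Pi.single_apply, apply_ite (cliffV l _), cliffV_zero]

theorem Yop_w2 (c : ℝ) (k m : Fin (2*l)) (s : Pol l) :
    Yop l 1 (w2 l c k m s)
      = (c : ℂ) • (w1 l m (cliffV l (omUp l k) s) - w1 l k (cliffV l (omUp l m) s)) := by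
  funext u
  simp only [Yop_apply, w2, w1, basisVec, Pi.single_apply, cliffV_smul, Fin.cons_zero,
    Fin.cons_one, Pi.smul_apply, Pi.sub_apply]
  simp only [mul_sub, ite_mul, one_mul, zero_mul, mul_ite, mul_zero, Complex.ofReal_sub, sub_smul,
    Finset.sum_sub_distrib, apply_ite Complex.ofReal, ite_smul, Complex.ofReal_zero, zero_smul,
    Finset.sum_ite_eq, Finset.mem_univ, if_true, smul_sub, smul_smul, Complex.ofReal_mul]

theorem Yop_Yop_w2 (c : ℝ) (k m : Fin (2*l)) (s : Pol l) :
    Yop l 0 (Yop l 1 (w2 l c k m s)) = fun _ => (Complex.I * (c * omUp l k m : ℝ)) • s := by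
  rw [Yop_w2, ← YopLin_apply, map_smul, map_sub, YopLin_apply, YopLin_apply, Yop_w1, Yop_w1]
  funext v
  simp only [Pi.smul_apply, Pi.sub_apply, cliffV_comm, omPair_omUp, smul_smul, omUp_antisymm m k]
  congr 1
  push_cast
  ring

end Contraction

section Ricci

variable {l : ℕ} {R : Fin (2*l) → Fin (2*l) → Fin (2*l) → Fin (2*l) → ℝ}

theorem ric_symm (h1 : ∀ i j k m, R i j k m = -R i j m k)
    (h2 : ∀ i j k m, R i j k m + R i k m j + R i m j k = 0)
    (h3 : ∀ i j k m, R i j k m = R j i k m) (a b : Fin (2*l)) :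
    ric l R a b = ric l R b a := by
  have trace_zero : ∑ k, ∑ m, omUp l k m * R m k a b = 0 := by
    have swap := sum_omUp_mul_swap (l := l) (fun k m => R k m a b)
    have sym : ∑ k, ∑ m, omUp l k m * R k m a b = ∑ k, ∑ m, omUp l k m * R m k a b :=
      Finset.sum_congr rfl fun k _ => Finset.sum_congr rfl fun m _ => by rw [h3]
    linarith
  have bianchi : ric l R a b - ric l R b a = -∑ k, ∑ m, omUp l k m * R m k a b := by
    simp only [ric, ← Finset.sum_sub_distrib, ← Finset.sum_neg_distrib]
    refine Finset.sum_congr rfl fun k _ => Finset.sum_congr rfl fun m _ => ?_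
    linear_combination omUp l k m * (h2 m b k a - h1 m a k b)
  linarith

theorem sum_curv_mul_omUp (h1 : ∀ i j k m, R i j k m = -R i j m k)
    (h2 : ∀ i j k m, R i j k m + R i k m j + R i m j k = 0)
    (h3 : ∀ i j k m, R i j k m = R j i k m) (a b : Fin (2*l)) :
    ∑ k, ∑ m, R a b k m * omUp l k m = 2 * ric l R a b := by
  have bianchi : ∑ k, ∑ m, R a b k m * omUp l k m
      = ∑ k, ∑ m, omUp l k m * R a m k b - ∑ k, ∑ m, omUp l k m * R a k m b := by
    simp only [← Finset.sum_sub_distrib]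
    refine Finset.sum_congr rfl fun k _ => Finset.sum_congr rfl fun m _ => ?_
    linear_combination omUp l k m * (h2 a b k m - h1 a m b k)
  have swap := sum_omUp_mul_swap (l := l) (fun k m => R a k m b)
  have ric_ba : ric l R b a = -∑ k, ∑ m, omUp l k m * R a k m b := by
    rw [ric, sum_omUp_mul_swap (fun k m => R k a m b)]
    simp only [h3 _ a]
  rw [bianchi, swap, ric_symm h1 h2 h3, ric_ba]
  ring

theorem sum_curvUp_mul_omUp (h1 : ∀ i j k m, R i j k m = -R i j m k)
    (h2 : ∀ i j k m, R i j k m + R i k m j + R i m j k = 0)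
    (h3 : ∀ i j k m, R i j k m = R j i k m) (i j : Fin (2*l)) :
    ∑ k, ∑ m, (∑ a, ∑ b, omUp l i a * omUp l j b * R a b k m) * omUp l k m
      = 2 * up2 l (ric l R) i j := by
  calc _ = ∑ a, ∑ b, omUp l i a * omUp l j b * ∑ k, ∑ m, R a b k m * omUp l k m := by
        simp only [Finset.sum_mul, Finset.mul_sum, mul_assoc]
        rw [Finset.sum_comm_cycle]
        exact Finset.sum_congr rfl fun a _ => Finset.sum_comm_cycle
    _ = 2 * up2 l (ric l R) i j := by
        simp only [sum_curv_mul_omUp h1 h2 h3, up2, Finset.mul_sum]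
        ring_nf

end Ricci

section Projection

variable {l : ℕ}

theorem Yop_Yop_curvS {R : Fin (2*l) → Fin (2*l) → Fin (2*l) → Fin (2*l) → ℝ}
    (h1 : ∀ i j k m, R i j k m = -R i j m k)
    (h2 : ∀ i j k m, R i j k m + R i k m j + R i m j k = 0)
    (h3 : ∀ i j k m, R i j k m = R j i k m) (φ : Pol l) :
    Yop l 0 (Yop l 1 (curvS l R φ))
      = fun _ => -∑ i, ∑ j, (up2 l (ric l R) i j : ℂ) • cliff l i (cliff l j φ) := by
  funext v
  simp only [curvS, ← YopLin_apply, map_smul, map_sum]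
  simp only [YopLin_apply, Yop_Yop_w2, Pi.smul_apply, Finset.sum_apply]
  have contract : ∀ i j, ∑ k, ∑ m, (Complex.I
        * ((∑ a, ∑ b, omUp l i a * omUp l j b * R a b k m) * omUp l k m : ℝ))
          • cliff l i (cliff l j φ)
      = (Complex.I * (2 * up2 l (ric l R) i j : ℝ)) • cliff l i (cliff l j φ) := by
    intro i j
    rw [← sum_curvUp_mul_omUp h1 h2 h3]
    simp only [← Finset.sum_smul, Complex.ofReal_sum, Finset.mul_sum]
  simp only [contract, Finset.smul_sum, smul_smul, ← Finset.sum_neg_distrib, ← neg_smul]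
  refine Finset.sum_congr rfl fun i _ => Finset.sum_congr rfl fun j _ => congrArg (· • _) ?_
  push_cast
  linear_combination (up2 l (ric l R) i j : ℂ) * Complex.I_sq

theorem Xop_Xop_const (T : Pol l) (v : Fin 2 → Fin (2*l) → ℝ) :
    Xop l 1 (Xop l 0 fun _ => T) v = -(Complex.I * (omPair l (v 0) (v 1) : ℂ)) • T := by
  have commutator : Xop l 1 (Xop l 0 fun _ => T) v
      = cliffV l (v 0) (cliffV l (v 1) T) - cliffV l (v 1) (cliffV l (v 0) T) := by
    simp [Xop, Fin.sum_univ_two, cliffV_neg, sub_eq_add_neg]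
  rw [commutator, cliffV_comm]

theorem sum_w2_om (c : ℝ) (s : Pol l) (v : Fin 2 → Fin (2*l) → ℝ) :
    ∑ k, ∑ m, w2 l (c * om l k m) k m s v
      = ((2 * c * omPair l (v 0) (v 1) : ℝ) : ℂ) • s := by
  simp only [w2, ← Finset.sum_smul, ← Complex.ofReal_sum, mul_assoc, ← Finset.mul_sum,
    sum_om_mul_wedge]
  congr 2
  ring

end Projection

theorem stmt_16_general (l : ℕ) (R : Fin (2*l) → Fin (2*l) → Fin (2*l) → Fin (2*l) → ℝ)
    (h1 : ∀ i j k m, R i j k m = - R i j m k)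
    (h2 : ∀ i j k m, R i j k m + R i k m j + R i m j k = 0)
    (h3 : ∀ i j k m, R i j k m = R j i k m)
    (φ : Pol l) :
    q20 l (curvS l R φ)
      = (Complex.I / (2 * (l : ℂ))) • ∑ i, ∑ j, ∑ k, ∑ m,
          w2 l (up2 l (ric l R) i j * om l k m) k m (cliff l i (cliff l j φ)) := by
  funext v
  simp only [q20, XXYY, Pi.smul_apply, Yop_Yop_curvS h1 h2 h3, Xop_Xop_const, Finset.sum_apply,
    sum_w2_om, Finset.smul_sum, smul_smul, ← Finset.sum_neg_distrib, ← neg_smul]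
  refine Finset.sum_congr rfl fun i _ => Finset.sum_congr rfl fun j _ => congrArg (· • _) ?_
  push_cast
  ring

/-- `q^{20}(R^S φ) = (𝕚/(2l)) Σ σ^{ij} ω_{km} ε^k ∧ ε^m ⊗ e_{ij}·φ`. -/
theorem stmt_16 (l : ℕ) (hl : 2 ≤ l) (R : Fin (2*l) → Fin (2*l) → Fin (2*l) → Fin (2*l) → ℝ)
    (h1 : ∀ i j k m, R i j k m = - R i j m k)
    (h2 : ∀ i j k m, R i j k m + R i k m j + R i m j k = 0)
    (h3 : ∀ i j k m, R i j k m = R j i k m)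
    (φ : Pol l) :
    q20 l (curvS l R φ)
      = (Complex.I / (2 * (l : ℂ))) • ∑ i, ∑ j, ∑ k, ∑ m,
          w2 l (up2 l (ric l R) i j * om l k m) k m (cliff l i (cliff l j φ)) :=
  stmt_16_general l R h1 h2 h3 φ

end
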